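/- arXiv:1805.04568 — 4 statements merged into one kernel-verified Lean document; each statement's English description precedes it below -/
import Mathlib

section
/- Let R be a commutative Noetherian local ring and M a finitely generated R-module with M* = Hom_R(M,R) nonzero. If Ext^1_R(Tr M, M*) = 0 and Ext^2_R(Tr M, M*) = 0, then M is free. -/
/-!
Splicing `0 → M* → F₀* → F₁* → Tr M → 0` with a projective resolution of `M*` gives a projective
resolution of `Tr M`. In it, `Ext²(Tr M, Y) = 0` says that every map `M* → Y` extends along
`M* → F₀*`, and `Ext¹(Tr M, Y) = 0` says that every map `F₀* → Y` vanishing on `M*` factors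
through `F₀* → F₁*`. Extending the identity of `M*` makes `M*` a direct summand of `F₀*`, hence
free, and makes `M → M**` surjective. Since `M* ≠ 0`, `R` is a direct summand of `M*`, so
`Ext¹(Tr M, R) = 0`, and this makes `M → M**` injective. Hence `M ≅ M**` is free.
-/

open CategoryTheory IsLocalRing

open Limits Opposite

namespace CategoryTheory.ProjectiveResolution

variable {C : Type*} [Category* C] [Abelian C]

section Augmentation

variable {K : C} (Q : ProjectiveResolution K)

/-- The augmentation `Q₀ ⟶ K`, landing in `K` itself: the degree-`0` term of the single complex
on `K` is only propositionally equal to `K`. -/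
noncomputable def ε : Q.complex.X 0 ⟶ K :=
  Q.π.f 0 ≫ (HomologicalComplex.singleObjXSelf (ComplexShape.down ℕ) 0 K).hom

instance : Epi Q.ε := by unfold ε; infer_instance

lemma d_comp_ε : Q.complex.d 1 0 ≫ Q.ε = 0 := by
  rw [ε, ← Category.assoc, complex_d_comp_π_f_zero, zero_comp]

lemma exact_d_ε : (ShortComplex.mk _ _ Q.d_comp_ε).Exact := by
  let α : ShortComplex.mk _ _ Q.complex_d_comp_π_f_zero ⟶ ShortComplex.mk _ _ Q.d_comp_ε :=
    { τ₁ := 𝟙 _, τ₂ := 𝟙 _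
      τ₃ := (HomologicalComplex.singleObjXSelf (ComplexShape.down ℕ) 0 K).hom
      comm₂₃ := Category.id_comp _ }
  exact (ShortComplex.exact_iff_of_epi_of_isIso_of_mono α).1 Q.exact₀

end Augmentation

section Splice

variable {K P₁ P₀ T : C} (Q : ProjectiveResolution K) {i : K ⟶ P₁} {d : P₁ ⟶ P₀} {φ : P₀ ⟶ T}

noncomputable def spliceComplex (hid : i ≫ d = 0) : ChainComplex C ℕ :=
  (Q.complex.augment (Q.ε ≫ i) (by rw [← Category.assoc, Q.d_comp_ε, zero_comp])).augment d
    (by rw [Category.assoc, hid, comp_zero] : (Q.ε ≫ i) ≫ d = 0)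

lemma spliceComplex_exactAt_succ (hid : i ≫ d = 0) (h₁ : (ShortComplex.mk i d hid).Exact)
    [Mono i] (n : ℕ) : (Q.spliceComplex hid).ExactAt (n + 1) := by
  rw [HomologicalComplex.exactAt_iff' _ (n + 2) (n + 1) n (by simp) (by simp)]
  match n with
  | 0 =>
    change (ShortComplex.mk (Q.ε ≫ i) d _).Exact
    let α : ShortComplex.mk (Q.ε ≫ i) d (by rw [Category.assoc, hid, comp_zero]) ⟶
        ShortComplex.mk i d hid :=
      { τ₁ := Q.ε, τ₂ := 𝟙 P₁, τ₃ := 𝟙 P₀ }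
    exact (ShortComplex.exact_iff_of_epi_of_isIso_of_mono α).2 h₁
  | 1 =>
    change (ShortComplex.mk (Q.complex.d 1 0) (Q.ε ≫ i) _).Exact
    let α : ShortComplex.mk _ _ Q.d_comp_ε ⟶
        ShortComplex.mk (Q.complex.d 1 0) (Q.ε ≫ i)
          (by rw [← Category.assoc, Q.d_comp_ε, zero_comp]) :=
      { τ₁ := 𝟙 _, τ₂ := 𝟙 _, τ₃ := i }
    exact (ShortComplex.exact_iff_of_epi_of_isIso_of_mono α).1 Q.exact_d_ε
  | n + 2 => exact Q.exact_succ n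

noncomputable def spliceπ (hid : i ≫ d = 0) (hdφ : d ≫ φ = 0) :
    Q.spliceComplex hid ⟶ (ChainComplex.single₀ C).obj T :=
  HomologicalComplex.mkHomToSingle (φ : (Q.spliceComplex hid).X 0 ⟶ T) fun j hj => by
    obtain rfl : j = 1 := by simpa using hj.symm
    exact hdφ

lemma quasiIsoAt_spliceπ_zero (hid : i ≫ d = 0) (hdφ : d ≫ φ = 0)
    (h₂ : (ShortComplex.mk d φ hdφ).Exact) [Epi φ] : QuasiIsoAt (Q.spliceπ hid hdφ) 0 := by
  rw [ChainComplex.quasiIsoAt₀_iff, ShortComplex.quasiIso_iff_of_zeros' _ rfl rfl rfl]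
  have hπ : (Q.spliceπ hid hdφ).f 0 = φ ≫ (HomologicalComplex.singleObjXSelf _ 0 T).inv :=
    HomologicalComplex.mkHomToSingle_f _ _
  let α : ShortComplex.mk d φ hdφ ⟶
      ShortComplex.mk ((Q.spliceComplex hid).d 1 0) ((Q.spliceπ hid hdφ).f 0)
        (by rw [← (Q.spliceπ hid hdφ).comm 1 0, HomologicalComplex.single_obj_d, comp_zero]) :=
    { τ₁ := 𝟙 P₁, τ₂ := 𝟙 P₀, τ₃ := (HomologicalComplex.singleObjXSelf _ 0 T).inv
      comm₁₂ := (Category.id_comp _).trans (Category.comp_id _).symm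
      comm₂₃ := (Category.id_comp _).trans hπ }
  have : Epi α.τ₁ := inferInstanceAs (Epi (𝟙 P₁))
  have : IsIso α.τ₂ := inferInstanceAs (IsIso (𝟙 P₀))
  have : Mono α.τ₃ :=
    inferInstanceAs (Mono (HomologicalComplex.singleObjXSelf (ComplexShape.down ℕ) 0 T).inv)
  refine ⟨(ShortComplex.exact_iff_of_epi_of_isIso_of_mono α).1 h₂, ?_⟩
  change Epi ((Q.spliceπ hid hdφ).f 0)
  exact hπ ▸ epi_comp φ _

noncomputable def splice [Projective P₀] [Projective P₁] (hid : i ≫ d = 0) (hdφ : d ≫ φ = 0)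
    (h₁ : (ShortComplex.mk i d hid).Exact) (h₂ : (ShortComplex.mk d φ hdφ).Exact) [Mono i]
    [Epi φ] : ProjectiveResolution T where
  complex := Q.spliceComplex hid
  projective
    | 0 => inferInstanceAs (Projective P₀)
    | 1 => inferInstanceAs (Projective P₁)
    | n + 2 => inferInstanceAs (Projective (Q.complex.X n))
  π := Q.spliceπ hid hdφ
  quasiIso := ⟨fun n => by
    cases n with
    | zero => exact Q.quasiIsoAt_spliceπ_zero hid hdφ h₂
    | succ n =>
      rw [quasiIsoAt_iff_exactAt' _ _ (ChainComplex.exactAt_succ_single_obj _ _)]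
      exact Q.spliceComplex_exactAt_succ hid h₁ n⟩

end Splice

variable {R : Type*} [Ring R] [Linear R C] [EnoughProjectives C]

lemma exists_d_comp_eq_of_subsingleton_ext {T Y : C} (P : ProjectiveResolution T) {n : ℕ}
    (h : Subsingleton (((Ext R C (n + 1)).obj (op T)).obj Y))
    (σ : P.complex.X (n + 1) ⟶ Y) (hσ : P.complex.d (n + 2) (n + 1) ≫ σ = 0) :
    ∃ χ : P.complex.X n ⟶ Y, P.complex.d (n + 1) n ≫ χ = σ := by
  have hexact : (P.complex.linearYonedaObj R Y).ExactAt (n + 1) := by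
    rw [HomologicalComplex.exactAt_iff_isZero_homology]
    exact (ModuleCat.isZero_iff_subsingleton.2 h).of_iso (P.isoExt (n + 1) Y).symm
  rw [HomologicalComplex.exactAt_iff' _ n (n + 1) (n + 2) (by simp) (by simp),
    ShortComplex.moduleCat_exact_iff] at hexact
  exact hexact σ hσ

end CategoryTheory.ProjectiveResolution

namespace CategoryTheory

variable {C : Type*} [Category* C] [Abelian C] {R : Type*} [Ring R] [Linear R C]
  [EnoughProjectives C]

section FourTermExact

variable {K P₁ P₀ T : C} [Projective P₀] [Projective P₁] {i : K ⟶ P₁} {d : P₁ ⟶ P₀}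
  {φ : P₀ ⟶ T} [Mono i] [Epi φ]

lemma exists_comp_eq_of_subsingleton_ext_one (hid : i ≫ d = 0) (hdφ : d ≫ φ = 0)
    (h₁ : (ShortComplex.mk i d hid).Exact) (h₂ : (ShortComplex.mk d φ hdφ).Exact) {Y : C}
    (h : Subsingleton (((Ext R C 1).obj (op T)).obj Y)) (χ : P₁ ⟶ Y) (hχ : i ≫ χ = 0) :
    ∃ ξ : P₀ ⟶ Y, d ≫ ξ = χ :=
  ((projectiveResolution K).splice hid hdφ h₁ h₂).exists_d_comp_eq_of_subsingleton_ext (n := 0) h χ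
    (by rw [Category.assoc, hχ, comp_zero] : ((projectiveResolution K).ε ≫ i) ≫ χ = 0)

lemma exists_comp_eq_of_subsingleton_ext_two (hid : i ≫ d = 0) (hdφ : d ≫ φ = 0)
    (h₁ : (ShortComplex.mk i d hid).Exact) (h₂ : (ShortComplex.mk d φ hdφ).Exact) {Y : C}
    (h : Subsingleton (((Ext R C 2).obj (op T)).obj Y)) (ψ : K ⟶ Y) :
    ∃ χ : P₁ ⟶ Y, i ≫ χ = ψ := by
  set Q := projectiveResolution K
  obtain ⟨χ, hχ⟩ : ∃ χ : P₁ ⟶ Y, (Q.ε ≫ i) ≫ χ = Q.ε ≫ ψ :=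
    (Q.splice hid hdφ h₁ h₂).exists_d_comp_eq_of_subsingleton_ext (n := 1) h
      (Q.ε ≫ ψ : Q.complex.X 0 ⟶ Y)
      (by rw [← Category.assoc, Q.d_comp_ε, zero_comp] : Q.complex.d 1 0 ≫ Q.ε ≫ ψ = 0)
  exact ⟨χ, (cancel_epi Q.ε).1 ((Category.assoc _ _ _).symm.trans hχ)⟩

end FourTermExact

lemma Retract.subsingleton_ext {T Y Z : C} (h : Retract Z Y) (n : ℕ)
    [Subsingleton (((Ext R C n).obj (Opposite.op T)).obj Y)] :
    Subsingleton (((Ext R C n).obj (Opposite.op T)).obj Z) :=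
  let e := h.map ((Ext R C n).obj (Opposite.op T))
  (Function.LeftInverse.injective (g := e.r) fun x =>
    ConcreteCategory.congr_hom e.retract x).subsingleton

end CategoryTheory

section ModuleCat

universe u

variable {R : Type u} [CommRing R] {K P₁ P₀ T Y : Type u} [AddCommGroup K] [Module R K]
  [AddCommGroup P₁] [Module R P₁] [Module.Projective R P₁]
  [AddCommGroup P₀] [Module R P₀] [Module.Projective R P₀]
  [AddCommGroup T] [Module R T] [AddCommGroup Y] [Module R Y]
  {i : K →ₗ[R] P₁} {d : P₁ →ₗ[R] P₀} {φ : P₀ →ₗ[R] T}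

theorem LinearMap.exists_comp_eq_of_subsingleton_ext_one (h₁ : Function.Exact i d)
    (h₂ : Function.Exact d φ) (hi : Function.Injective i) (hφ : Function.Surjective φ)
    (h : Subsingleton (((Ext R (ModuleCat.{u} R) 1).obj (Opposite.op (ModuleCat.of R T))).obj
      (ModuleCat.of R Y)))
    (χ : P₁ →ₗ[R] Y) (hχ : χ ∘ₗ i = 0) : ∃ ξ : P₀ →ₗ[R] Y, ξ ∘ₗ d = χ := by
  have hid : ModuleCat.ofHom i ≫ ModuleCat.ofHom d = 0 :=
    ModuleCat.hom_ext h₁.linearMap_comp_eq_zero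
  have hdφ : ModuleCat.ofHom d ≫ ModuleCat.ofHom φ = 0 :=
    ModuleCat.hom_ext h₂.linearMap_comp_eq_zero
  have : Mono (ModuleCat.ofHom i) := (ModuleCat.mono_iff_injective _).2 hi
  have : Epi (ModuleCat.ofHom φ) := (ModuleCat.epi_iff_surjective _).2 hφ
  obtain ⟨ξ, hξ⟩ := CategoryTheory.exists_comp_eq_of_subsingleton_ext_one hid hdφ
    ((ShortComplex.ShortExact.moduleCat_exact_iff_function_exact (.mk _ _ hid)).2 h₁)
    ((ShortComplex.ShortExact.moduleCat_exact_iff_function_exact (.mk _ _ hdφ)).2 h₂) h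
    (ModuleCat.ofHom χ) (ModuleCat.hom_ext hχ)
  exact ⟨ξ.hom, congrArg ModuleCat.Hom.hom hξ⟩

theorem LinearMap.exists_comp_eq_of_subsingleton_ext_two (h₁ : Function.Exact i d)
    (h₂ : Function.Exact d φ) (hi : Function.Injective i) (hφ : Function.Surjective φ)
    (h : Subsingleton (((Ext R (ModuleCat.{u} R) 2).obj (Opposite.op (ModuleCat.of R T))).obj
      (ModuleCat.of R Y)))
    (ψ : K →ₗ[R] Y) : ∃ χ : P₁ →ₗ[R] Y, χ ∘ₗ i = ψ := by
  have hid : ModuleCat.ofHom i ≫ ModuleCat.ofHom d = 0 :=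
    ModuleCat.hom_ext h₁.linearMap_comp_eq_zero
  have hdφ : ModuleCat.ofHom d ≫ ModuleCat.ofHom φ = 0 :=
    ModuleCat.hom_ext h₂.linearMap_comp_eq_zero
  have : Mono (ModuleCat.ofHom i) := (ModuleCat.mono_iff_injective _).2 hi
  have : Epi (ModuleCat.ofHom φ) := (ModuleCat.epi_iff_surjective _).2 hφ
  obtain ⟨χ, hχ⟩ := CategoryTheory.exists_comp_eq_of_subsingleton_ext_two hid hdφ
    ((ShortComplex.ShortExact.moduleCat_exact_iff_function_exact (.mk _ _ hid)).2 h₁)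
    ((ShortComplex.ShortExact.moduleCat_exact_iff_function_exact (.mk _ _ hdφ)).2 h₂) h
    (ModuleCat.ofHom ψ)
  exact ⟨χ.hom, congrArg ModuleCat.Hom.hom hχ⟩

end ModuleCat

namespace Module

universe u

theorem Free.nonempty_retract_self {R P : Type u} [CommRing R] [AddCommGroup P] [Module R P]
    [Module.Free R P] [Nontrivial P] :
    Nonempty (Retract (ModuleCat.of R R) (ModuleCat.of R P)) := by
  let b := Module.Free.chooseBasis R P
  obtain ⟨j⟩ := b.index_nonempty
  exact ⟨{ i := ModuleCat.ofHom (LinearMap.toSpanSingleton R P (b j))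
           r := ModuleCat.ofHom (b.coord j)
           retract := by ext; simp }⟩

variable {R : Type*} [CommRing R] {M F : Type*} [AddCommGroup M] [Module R M]
  [AddCommGroup F] [Module R F]

theorem free_of_comp_eq_id [IsLocalRing R] [Module.Projective R F] [Module.Finite R M]
    (i : M →ₗ[R] F) (r : F →ₗ[R] M) (h : r ∘ₗ i = LinearMap.id) : Module.Free R M :=
  have := Module.Projective.of_split i r h
  free_of_flat_of_isLocalRing

theorem surjective_dual_eval_of_comp_dualMap_eq_id [IsReflexive R F] (q : F →ₗ[R] M)
    (r : Dual R F →ₗ[R] Dual R M) (hr : r ∘ₗ q.dualMap = LinearMap.id) :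
    Function.Surjective (Dual.eval R M) := by
  intro ζ
  obtain ⟨x, hx⟩ := (bijective_dual_eval R F).surjective (ζ ∘ₗ r)
  refine ⟨q x, LinearMap.ext fun f => ?_⟩
  calc f (q x) = Dual.eval R F x (q.dualMap f) := rfl
    _ = ζ f := by rw [hx, LinearMap.comp_apply, ← LinearMap.comp_apply r, hr, LinearMap.id_apply]

theorem injective_dual_eval_of_exact {F₁ : Type*} [AddCommGroup F₁] [Module R F₁]
    [IsReflexive R F] [IsReflexive R F₁] {p : F₁ →ₗ[R] F} {q : F →ₗ[R] M}
    (hpq : Function.Exact p q) (hq : Function.Surjective q)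
    (h : ∀ χ : Dual R (Dual R F), χ ∘ₗ q.dualMap = 0 →
      ∃ ξ : Dual R (Dual R F₁), ξ ∘ₗ p.dualMap = χ) :
    Function.Injective (Dual.eval R M) := by
  rw [← LinearMap.ker_eq_bot, LinearMap.ker_eq_bot']
  intro m hm
  obtain ⟨x, rfl⟩ := hq m
  obtain ⟨ξ, hξ⟩ := h (Dual.eval R F x) (LinearMap.ext fun f => LinearMap.congr_fun hm f)
  obtain ⟨y, rfl⟩ := (bijective_dual_eval R F₁).surjective ξ
  have hxy : p y = x :=
    (bijective_dual_eval R F).injective (LinearMap.ext fun g => LinearMap.congr_fun hξ g)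
  rw [← hxy]
  exact hpq.apply_apply_eq_zero y

end Module

theorem stmt_0_general (R : Type) [CommRing R] [IsLocalRing R]
    (M : Type) [AddCommGroup M] [Module R M]
    (hM : Nontrivial (Module.Dual R M))
    (F₀ F₁ : Type) [AddCommGroup F₀] [Module R F₀] [Module.Free R F₀] [Module.Finite R F₀]
    [AddCommGroup F₁] [Module R F₁] [Module.Free R F₁] [Module.Finite R F₁]
    (p : F₁ →ₗ[R] F₀) (q : F₀ →ₗ[R] M)
    (hq : Function.Surjective q) (hpq : Function.Exact p q)
    (Tr : Type) [AddCommGroup Tr] [Module R Tr]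
    (e : Tr ≃ₗ[R] (Module.Dual R F₁ ⧸ LinearMap.range (p.dualMap)))
    (h1 : Subsingleton (((_root_.Ext R (ModuleCat.{0} R) 1).obj
        (Opposite.op (ModuleCat.of R Tr))).obj (ModuleCat.of R (Module.Dual R M))))
    (h2 : Subsingleton (((_root_.Ext R (ModuleCat.{0} R) 2).obj
        (Opposite.op (ModuleCat.of R Tr))).obj (ModuleCat.of R (Module.Dual R M)))) :
    Module.Free R M := by
  have hdual : Function.Exact q.dualMap p.dualMap :=
    LinearMap.exact_lcomp_of_exact_of_surjective R hpq hq
  have hTr : Function.Exact p.dualMap (e.symm.toLinearMap ∘ₗ (LinearMap.range p.dualMap).mkQ) :=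
    LinearEquiv.postcomp_exact_iff_exact.2 (LinearMap.exact_map_mkQ_range _)
  have hq_dual := LinearMap.dualMap_injective_of_surjective hq
  have hTr_surj := e.symm.surjective.comp (Submodule.mkQ_surjective (LinearMap.range p.dualMap))
  obtain ⟨r, hr⟩ := LinearMap.exists_comp_eq_of_subsingleton_ext_two hdual hTr hq_dual hTr_surj h2
    LinearMap.id
  have := Module.Finite.of_surjective r fun f => ⟨q.dualMap f, LinearMap.congr_fun hr f⟩
  have := Module.free_of_comp_eq_id q.dualMap r hr
  obtain ⟨retract⟩ := Module.Free.nonempty_retract_self (R := R) (P := Module.Dual R M)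
  have h1R := retract.subsingleton_ext (R := R) (T := ModuleCat.of R Tr) 1
  refine Module.Free.of_equiv (LinearEquiv.ofBijective (Module.Dual.eval R M) ⟨?_,
    Module.surjective_dual_eval_of_comp_dualMap_eq_id q r hr⟩).symm
  exact Module.injective_dual_eval_of_exact hpq hq fun χ hχ =>
    LinearMap.exists_comp_eq_of_subsingleton_ext_one hdual hTr hq_dual hTr_surj h1R χ hχ

/-- Let `R` be a commutative Noetherian local ring and `M` a finitely
generated module with `M* = Hom_R(M,R)` nonzero.  Given a minimal free presentation
`F₁ → F₀ → M → 0`, the Auslander transpose `Tr M` is the cokernel of the dual map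
`F₀* → F₁*`.  If `Ext¹_R(Tr M, M*) = 0` and `Ext²_R(Tr M, M*) = 0`, then `M` is free. -/
theorem stmt_0 (R : Type) [CommRing R] [IsNoetherianRing R] [IsLocalRing R]
    (M : Type) [AddCommGroup M] [Module R M] [Module.Finite R M]
    (hM : Nontrivial (Module.Dual R M))
    (F₀ F₁ : Type) [AddCommGroup F₀] [Module R F₀] [Module.Free R F₀] [Module.Finite R F₀]
    [AddCommGroup F₁] [Module R F₁] [Module.Free R F₁] [Module.Finite R F₁]
    (p : F₁ →ₗ[R] F₀) (q : F₀ →ₗ[R] M)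
    (hq : Function.Surjective q) (hpq : Function.Exact p q)
    -- minimality of the presentation
    (hmin₀ : LinearMap.ker q ≤ (maximalIdeal R) • (⊤ : Submodule R F₀))
    (hmin₁ : LinearMap.ker p ≤ (maximalIdeal R) • (⊤ : Submodule R F₁))
    -- the transpose of `M`
    (Tr : Type) [AddCommGroup Tr] [Module R Tr]
    (e : Tr ≃ₗ[R] (Module.Dual R F₁ ⧸ LinearMap.range (p.dualMap)))
    (h1 : Subsingleton (((_root_.Ext R (ModuleCat.{0} R) 1).obj
        (Opposite.op (ModuleCat.of R Tr))).obj (ModuleCat.of R (Module.Dual R M))))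
    (h2 : Subsingleton (((_root_.Ext R (ModuleCat.{0} R) 2).obj
        (Opposite.op (ModuleCat.of R Tr))).obj (ModuleCat.of R (Module.Dual R M)))) :
    Module.Free R M :=
  stmt_0_general R M hM F₀ F₁ p q hq hpq Tr e h1 h2
end

section
/- Let R = C[[x,y]]/(xy), M = R/(x), N = R/(x^2). Then Tor_s^R(M, N) = 0 if s is a positive even integer, and Tor_s^R(M, N) \neq 0 if s is a positive odd integer. -/
open CategoryTheory MvPowerSeries

noncomputable section

/-- The ring `R = ℂ[[x,y]]/(xy)`. -/
abbrev R10 : Type :=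
  MvPowerSeries (Fin 2) ℂ ⧸
    Ideal.span {(X 0 : MvPowerSeries (Fin 2) ℂ) * X 1}

def x10 : R10 := Ideal.Quotient.mk _ (X 0)

/-- `M = R/(x)` -/
abbrev M10 : Type := R10 ⧸ Ideal.span {x10}
/-- `N = R/(x²)` -/
abbrev N10 : Type := R10 ⧸ Ideal.span {x10 ^ 2}

/-!
Since `Tor` is derived in its second argument, we resolve `N`: over `R`, `R/(x²)` has the
2-periodic free resolution `⋯ →y R →x R →y R →x² R → R/(x²)`, exact because in `R` the
annihilator of `x²` and of `x` is `(y)` and that of `y` is `(x)` (in the domain `ℂ[[x,y]]`,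
`x ∣ φ yⁿ` forces `x ∣ φ`, and symmetrically). Tensoring with `M = R/(x)` kills
`x`, so `Tor_s(M, N)` is the homology of `M ←0 M ←y M ←0 M ←y ⋯`. As `y` is a
nonzerodivisor on `M ≅ ℂ[[y]]`, the homology vanishes in even positive degrees, and in odd
degrees it is `M/yM ≅ ℂ`, which is nonzero because `1 ∉ (x, y)`.
-/

open Limits MonoidalCategory

namespace MvPowerSeries

theorem X_ne_zero {σ R : Type*} [CommSemiring R] [Nontrivial R] (s : σ) :
    (X s : MvPowerSeries σ R) ≠ 0 :=
  ne_of_apply_ne (coeff (Finsupp.single s 1)) (by simp)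

theorem X_dvd_of_X_dvd_mul_X_pow {σ R : Type*} [CommSemiring R] {i j : σ} (hij : i ≠ j)
    {φ : MvPowerSeries σ R} (n : ℕ) (h : X i ∣ φ * X j ^ n) : X i ∣ φ := by
  classical
  rw [X_dvd_iff] at h ⊢
  intro m hm
  have := h (m + Finsupp.single j n) (by simp [hm, hij.symm])
  rwa [X_pow_eq, coeff_add_mul_monomial, mul_one] at this

end MvPowerSeries

theorem Ideal.Quotient.mk_mem_span_singleton_mk_iff {S : Type*} [CommRing S] {a b c : S}
    (h : b ∣ a) :
    Ideal.Quotient.mk (Ideal.span {a}) c ∈ Ideal.span {Ideal.Quotient.mk (Ideal.span {a}) b} ↔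
      b ∣ c := by
  rw [← Set.image_singleton, ← Ideal.map_span,
    Ideal.mem_quotient_iff_mem (Ideal.span_singleton_le_span_singleton.2 h),
    Ideal.mem_span_singleton]

section MulComplex

universe u

variable {R : Type u} [CommRing R] (e : ℕ → R) (he : ∀ n, e (n + 1) * e n = 0)
  (A : Type u) [AddCommGroup A] [Module R A]

def mulComplex : ChainComplex (ModuleCat.{u} R) ℕ :=
  ChainComplex.of (fun _ => ModuleCat.of R A)
    (fun n => ModuleCat.ofHom (LinearMap.lsmul R A (e n))) fun n => by ext a; simp [smul_smul, he]

lemma mulComplex_d (n : ℕ) :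
    (mulComplex e he A).d (n + 1) n = ModuleCat.ofHom (LinearMap.lsmul R A (e n)) :=
  ChainComplex.of_d (fun _ => ModuleCat.of R A)
    (fun k => ModuleCat.ofHom (LinearMap.lsmul R A (e k))) n

lemma mulComplex_exactAt_succ_iff (n : ℕ) :
    (mulComplex e he A).ExactAt (n + 1) ↔
      ∀ a : A, e n • a = 0 → ∃ b : A, e (n + 1) • b = a := by
  rw [HomologicalComplex.exactAt_iff' _ (n + 2) (n + 1) n (by simp) (by simp),
    ShortComplex.moduleCat_exact_iff]
  simp only [HomologicalComplex.shortComplexFunctor'_obj_f,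
    HomologicalComplex.shortComplexFunctor'_obj_g, mulComplex_d]
  rfl

def mulComplexTensorIso :
    (((tensoringLeft (ModuleCat.{u} R)).obj (ModuleCat.of R A)).mapHomologicalComplex _).obj
      (mulComplex e he R) ≅ mulComplex e he A :=
  HomologicalComplex.Hom.isoOfComponents (fun _ => (TensorProduct.rid R A).toModuleIso) <| by
    rintro i j (rfl : j + 1 = i)
    refine ModuleCat.hom_ext (TensorProduct.ext' fun (a : A) (r : R) => ?_)
    simp only [Functor.mapHomologicalComplex_obj_d, mulComplex_d]
    change e j • TensorProduct.rid R A (a ⊗ₜ r) = TensorProduct.rid R A (a ⊗ₜ (e j • r))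
    rw [TensorProduct.rid_tmul, TensorProduct.rid_tmul, smul_smul, smul_eq_mul]

def mulComplexAugmentation :
    mulComplex e he R ⟶
      (ChainComplex.single₀ _).obj (ModuleCat.of R (R ⧸ Ideal.span {e 0})) :=
  (ChainComplex.toSingle₀Equiv _ _).symm ⟨ModuleCat.ofHom (Ideal.span {e 0}).mkQ, by
    rw [mulComplex_d e he R 0]
    refine ModuleCat.hom_ext (LinearMap.ext fun c => ?_)
    exact (Submodule.Quotient.mk_eq_zero _).2
      (Ideal.mul_mem_right _ _ (Ideal.mem_span_singleton_self _))⟩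

lemma mulComplexAugmentation_f_zero :
    (mulComplexAugmentation e he).f 0 = ModuleCat.ofHom (Ideal.span {e 0}).mkQ :=
  ChainComplex.toSingle₀Equiv_symm_apply_f_zero _ _

def mulResolution (hexact : ∀ n c, e n * c = 0 → c ∈ Ideal.span {e (n + 1)}) :
    ProjectiveResolution (ModuleCat.of R (R ⧸ Ideal.span {e 0})) where
  complex := mulComplex e he R
  projective _ := ModuleCat.projective_of_free (Module.Basis.singleton PUnit.{u + 1} R)
  π := mulComplexAugmentation e he
  quasiIso := ⟨fun n => by
    cases n with
    | zero =>
      rw [ChainComplex.quasiIsoAt₀_iff, ShortComplex.quasiIso_iff_of_zeros']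
      · rw [ShortComplex.moduleCat_exact_iff, ModuleCat.epi_iff_surjective]
        simp only [HomologicalComplex.shortComplexFunctor'_map_τ₂, mulComplexAugmentation_f_zero]
        refine ⟨fun (c : R) hc => ?_, Submodule.mkQ_surjective _⟩
        obtain ⟨a, rfl⟩ := Ideal.mem_span_singleton.1 ((Submodule.Quotient.mk_eq_zero _).1 hc)
        exact ⟨a, rfl⟩
      · exact (mulComplex e he R).shape 0 0 (by simp)
      all_goals rfl
    | succ n =>
      rw [quasiIsoAt_iff_exactAt' _ _ (ChainComplex.exactAt_succ_single_obj _ _),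
        mulComplex_exactAt_succ_iff]
      intro c hc
      obtain ⟨b, rfl⟩ := Ideal.mem_span_singleton.1 (hexact n c hc)
      exact ⟨b, rfl⟩⟩

def torIsoHomologyMulComplex
    (hexact : ∀ n c, e n * c = 0 → c ∈ Ideal.span {e (n + 1)}) (n : ℕ) :
    ((Tor (ModuleCat.{u} R) n).obj (ModuleCat.of R A)).obj
      (ModuleCat.of R (R ⧸ Ideal.span {e 0})) ≅ (mulComplex e he A).homology n :=
  (mulResolution e he hexact).isoLeftDerivedObj _ n ≪≫
    (HomologicalComplex.homologyFunctor _ _ n).mapIso (mulComplexTensorIso e he A)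

end MulComplex

def y10 : R10 := Ideal.Quotient.mk _ (X 1)

lemma x10_mul_y10 : x10 * y10 = 0 := by
  rw [x10, y10, ← map_mul, Ideal.Quotient.eq_zero_iff_mem]
  exact Ideal.mem_span_singleton_self _

lemma y10_mul_x10 : y10 * x10 = 0 := by
  rw [mul_comm, x10_mul_y10]

lemma mem_span_y10_of_mul_x10_pow_eq_zero {c : R10} (k : ℕ) (h : c * x10 ^ (k + 1) = 0) :
    c ∈ Ideal.span {y10} := by
  obtain ⟨C, rfl⟩ := Ideal.Quotient.mk_surjective c
  rw [x10, ← map_pow, ← map_mul, Ideal.Quotient.eq_zero_iff_mem, Ideal.mem_span_singleton,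
    pow_succ', mul_left_comm, mul_dvd_mul_iff_left (X_ne_zero 0)] at h
  rw [y10, Ideal.Quotient.mk_mem_span_singleton_mk_iff (dvd_mul_left _ _)]
  exact X_dvd_of_X_dvd_mul_X_pow one_ne_zero k h

lemma mem_span_x10_of_mul_y10_eq_zero {c : R10} (h : c * y10 = 0) : c ∈ Ideal.span {x10} := by
  obtain ⟨C, rfl⟩ := Ideal.Quotient.mk_surjective c
  rw [y10, ← map_mul, Ideal.Quotient.eq_zero_iff_mem, Ideal.mem_span_singleton, mul_comm C,
    mul_comm (X 0), mul_dvd_mul_iff_left (X_ne_zero 1)] at h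
  rwa [x10, Ideal.Quotient.mk_mem_span_singleton_mk_iff (dvd_mul_right _ _)]

lemma eq_zero_of_y10_smul_eq_zero {m : M10} (h : y10 • m = 0) : m = 0 := by
  obtain ⟨c, rfl⟩ := Submodule.Quotient.mk_surjective _ m
  obtain ⟨C, rfl⟩ := Ideal.Quotient.mk_surjective c
  rw [← Submodule.Quotient.mk_smul, Submodule.Quotient.mk_eq_zero, smul_eq_mul, y10, ← map_mul,
    x10, Ideal.Quotient.mk_mem_span_singleton_mk_iff (dvd_mul_right _ _)] at h
  rw [Submodule.Quotient.mk_eq_zero, x10,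
    Ideal.Quotient.mk_mem_span_singleton_mk_iff (dvd_mul_right _ _)]
  exact X_dvd_of_X_dvd_mul_X_pow zero_ne_one 1 (by rwa [pow_one, mul_comm])

lemma y10_smul_ne_one (m : M10) : y10 • m ≠ 1 := by
  obtain ⟨c, rfl⟩ := Submodule.Quotient.mk_surjective _ m
  obtain ⟨C, rfl⟩ := Ideal.Quotient.mk_surjective c
  rw [← Submodule.Quotient.mk_smul, smul_eq_mul,
    show (1 : M10) = Submodule.Quotient.mk 1 from rfl, Ne, Submodule.Quotient.eq, y10, ← map_mul,
    ← map_one (Ideal.Quotient.mk _), ← map_sub, x10,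
    Ideal.Quotient.mk_mem_span_singleton_mk_iff (dvd_mul_right _ _), X_dvd_iff]
  intro h
  simpa using h 0 rfl

def diff10 : ℕ → R10
  | 0 => x10 ^ 2
  | n + 1 => if Even n then y10 else x10

lemma diff10_succ_mul (n : ℕ) : diff10 (n + 1) * diff10 n = 0 := by
  rcases n with _ | n
  · simp [diff10, pow_two, ← mul_assoc, y10_mul_x10]
  · by_cases hn : Even n
    · simp [diff10, hn, Nat.even_add_one, x10_mul_y10]
    · simp [diff10, hn, Nat.even_add_one, y10_mul_x10]

lemma diff10_exact (n : ℕ) (c : R10) (hc : diff10 n * c = 0) :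
    c ∈ Ideal.span {diff10 (n + 1)} := by
  rw [mul_comm] at hc
  rcases n with _ | n
  · exact mem_span_y10_of_mul_x10_pow_eq_zero 1 hc
  · by_cases hn : Even n
    · simp only [diff10, hn, if_true, Nat.even_add_one, not_true, if_false] at hc ⊢
      exact mem_span_x10_of_mul_y10_eq_zero hc
    · simp only [diff10, hn, if_false, Nat.even_add_one, not_false_eq_true, if_true] at hc ⊢
      exact mem_span_y10_of_mul_x10_pow_eq_zero 0 (by rwa [pow_one])

lemma diff10_of_odd {n : ℕ} (hn : Odd n) : diff10 n = y10 := by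
  obtain ⟨k, rfl⟩ := hn
  simp [diff10]

lemma diff10_smul_eq_zero_of_even {n : ℕ} (hn : Even n) (m : M10) : diff10 n • m = 0 := by
  have hx : diff10 n ∈ Ideal.span {x10} := by
    rcases n with _ | n
    · exact Ideal.mem_span_singleton.2 (dvd_pow_self _ two_ne_zero)
    · rw [Nat.even_add_one] at hn
      simp [diff10, hn]
  obtain ⟨c, rfl⟩ := Submodule.Quotient.mk_surjective _ m
  rw [← Submodule.Quotient.mk_smul, Submodule.Quotient.mk_eq_zero, smul_eq_mul]
  exact Ideal.mul_mem_right _ _ hx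

lemma mulComplex_diff10_exactAt_succ_iff (n : ℕ) :
    (mulComplex diff10 diff10_succ_mul M10).ExactAt (n + 1) ↔ Odd n := by
  rw [mulComplex_exactAt_succ_iff]
  rcases Nat.even_or_odd n with hn | hn
  · simp only [Nat.not_odd_iff_even.2 hn, iff_false, diff10_of_odd hn.add_one]
    intro h
    obtain ⟨m, hm⟩ := h 1 (diff10_smul_eq_zero_of_even hn 1)
    exact y10_smul_ne_one m hm
  · simp only [hn, iff_true, diff10_of_odd hn]
    intro m hm
    exact ⟨0, by rw [smul_zero, eq_zero_of_y10_smul_eq_zero hm]⟩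

lemma isZero_tor_succ_M10_N10_iff (n : ℕ) :
    IsZero (((Tor (ModuleCat.{0} R10) (n + 1)).obj (ModuleCat.of R10 M10)).obj
      (ModuleCat.of R10 N10)) ↔ Odd n :=
  -- `N10` is `R10 ⧸ Ideal.span {diff10 0}` only up to unfolding `diff10`, hence `trans`, not `rw`
  (torIsoHomologyMulComplex diff10 diff10_succ_mul M10 diff10_exact (n + 1)).isZero_iff.trans <| by
    rw [← HomologicalComplex.exactAt_iff_isZero_homology, mulComplex_diff10_exactAt_succ_iff]

/-- For `R = ℂ[[x,y]]/(xy)`, `M = R/(x)` and `N = R/(x²)`: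
`Tor_s^R(M,N) = 0` for positive even `s`, and `Tor_s^R(M,N) ≠ 0` for positive odd `s`. -/
theorem stmt_10 :
    (∀ s : ℕ, 0 < s → Even s →
      Subsingleton (((Tor (ModuleCat.{0} R10) s).obj (ModuleCat.of R10 M10)).obj
        (ModuleCat.of R10 N10))) ∧
    (∀ s : ℕ, 0 < s → Odd s →
      Nontrivial (((Tor (ModuleCat.{0} R10) s).obj (ModuleCat.of R10 M10)).obj
        (ModuleCat.of R10 N10))) := by
  refine ⟨fun s hs heven => ?_, fun s hs hodd => ?_⟩
  · obtain ⟨n, rfl⟩ := Nat.exists_eq_add_one_of_ne_zero hs.ne'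
    rw [← ModuleCat.isZero_iff_subsingleton, isZero_tor_succ_M10_N10_iff]
    simpa [Nat.even_add_one] using heven
  · obtain ⟨n, rfl⟩ := Nat.exists_eq_add_one_of_ne_zero hs.ne'
    rw [← not_subsingleton_iff_nontrivial, ← ModuleCat.isZero_iff_subsingleton,
      isZero_tor_succ_M10_N10_iff]
    simpa [Nat.odd_add_one] using hodd
end
end

section
/- Let R be a commutative Noetherian local ring and I an ideal of R containing a non zero-divisor, such that I is not principal. Then I \otimes_R I has a nonzero torsion element; in particular I \otimes_R I is not torsion-free. -/
/-!
For `x, y ∈ I` and `c ∈ I`, moving scalars across the tensor sign gives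
`c • (x ⊗ y - y ⊗ x) = c ⊗ xy - c ⊗ yx = 0`, so `x ⊗ y - y ⊗ x` is torsion once `I` contains a
non zero-divisor. By Nakayama, a non-principal finitely generated ideal has two elements whose
images in `k ⊗ I` (`k` the residue field) are linearly independent; for those, the bilinear map
`(u, v) ↦ φ(u) ψ(v)` built from dual functionals with `φ(y) = 0 ≠ φ(x)` and `ψ(y) ≠ 0` takes
the value `φ(x) ψ(y) ≠ 0` on `x ⊗ y - y ⊗ x`.
-/

open IsLocalRing TensorProduct

theorem Ideal.smul_tmul_sub_tmul_eq_zero {R : Type*} [CommRing R] (I : Ideal R) {c : R}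
    (hc : c ∈ I) (x y : I) : c • (x ⊗ₜ[R] y - y ⊗ₜ[R] x) = 0 := by
  have hmove : ∀ u v : I, c • (u ⊗ₜ[R] v) = (⟨c, hc⟩ : I) ⊗ₜ[R] ((u : R) • v) := fun u v => by
    rw [smul_tmul', ← smul_tmul]
    congr 1
    exact Subtype.ext (mul_comm c u)
  have hxy : (x : R) • y = (y : R) • x := Subtype.ext (mul_comm (x : R) y)
  rw [smul_sub, hmove, hmove, hxy, sub_self]

theorem TensorProduct.tmul_sub_tmul_ne_zero {R M K V : Type*} [CommRing R] [AddCommGroup M]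
    [Module R M] [Field K] [Algebra R K] [AddCommGroup V] [Module K V] [Module R V]
    [IsScalarTower R K V] (f : M →ₗ[R] V) {x y : M} (hy : f y ≠ 0) (hxy : f x ∉ K ∙ f y) :
    x ⊗ₜ[R] y - y ⊗ₜ[R] x ≠ 0 := by
  obtain ⟨φ, hφx, hφy⟩ := Submodule.exists_dual_map_eq_bot_of_notMem hxy inferInstance
  obtain ⟨ψ, hψy⟩ := Module.Projective.exists_dual_ne_zero K hy
  have hφy : φ (f y) = 0 := by
    simpa [Submodule.map_span] using hφy
  let T : M ⊗[R] M →ₗ[R] K := lift <| (LinearMap.mul R K).compl₁₂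
    ((φ.restrictScalars R).comp f) ((ψ.restrictScalars R).comp f)
  intro hz
  apply mul_ne_zero hφx hψy
  simpa [T, hφy] using congrArg T hz

theorem Submodule.IsPrincipal.of_span_singleton_eq_top {R M : Type*} [Semiring R]
    [AddCommMonoid M] [Module R M] {N : Submodule R M} {x : N} (hx : (R ∙ x) = ⊤) :
    N.IsPrincipal :=
  ⟨x, by simpa [Submodule.map_span] using (congrArg (Submodule.map N.subtype) hx).symm⟩

theorem Submodule.exists_notMem_span_singleton {K V : Type*} [Semiring K] [AddCommMonoid V]
    [Module K V] (h : ∀ v : V, (K ∙ v) ≠ ⊤) : ∃ u v : V, v ≠ 0 ∧ u ∉ K ∙ v := by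
  obtain ⟨v, hv⟩ : ∃ v : V, v ≠ 0 := by
    by_contra! hV
    exact h 0 (Submodule.eq_top_iff'.2 fun v => by simp [hV v])
  obtain ⟨u, hu⟩ : ∃ u, u ∉ K ∙ v := by simpa [Submodule.eq_top_iff'] using h v
  exact ⟨u, v, hv, hu⟩

namespace IsLocalRing

variable {R M : Type*} [CommRing R] [IsLocalRing R] [AddCommGroup M] [Module R M]
  [Module.Finite R M]

theorem span_singleton_one_tmul_eq_top_iff {x : M} :
    (ResidueField R ∙ ((1 : ResidueField R) ⊗ₜ[R] x)) = ⊤ ↔ (R ∙ x) = ⊤ := by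
  rw [← map_tensorProduct_mk_eq_top (N := R ∙ x), Submodule.map_span, Set.image_singleton,
    mk_apply,
    ← Submodule.restrictScalars_span R (ResidueField R) Ideal.Quotient.mk_surjective
      {(1 : ResidueField R) ⊗ₜ[R] x}, Submodule.restrictScalars_eq_top_iff]

theorem exists_one_tmul_notMem_span_of_forall_span_ne_top (h : ∀ x : M, (R ∙ x) ≠ ⊤) :
    ∃ x y : M, (1 : ResidueField R) ⊗ₜ[R] y ≠ 0 ∧
      (1 : ResidueField R) ⊗ₜ[R] x ∉ ResidueField R ∙ ((1 : ResidueField R) ⊗ₜ[R] y) := by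
  have hsurj := TensorProduct.mk_surjective R M (ResidueField R) Ideal.Quotient.mk_surjective
  obtain ⟨u, v, hv, huv⟩ := Submodule.exists_notMem_span_singleton (K := ResidueField R)
    (V := ResidueField R ⊗[R] M) fun v => by
      obtain ⟨x, rfl⟩ := hsurj v
      exact span_singleton_one_tmul_eq_top_iff.not.2 (h x)
  obtain ⟨x, rfl⟩ := hsurj u
  obtain ⟨y, rfl⟩ := hsurj v
  exact ⟨x, y, hv, huv⟩

end IsLocalRing

/-- If `I` is a non-principal ideal of a commutative Noetherian local
ring containing a non zero-divisor, then `I ⊗_R I` has a nonzero torsion element;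
in particular it is not torsion-free. -/
theorem stmt_15 (R : Type) [CommRing R] [IsNoetherianRing R] [IsLocalRing R]
    (I : Ideal R) (a : R) (ha : a ∈ I) (ha' : a ∈ nonZeroDivisors R)
    (hI : ¬ I.IsPrincipal) :
    (∃ z : (↥I) ⊗[R] (↥I), z ∈ Submodule.torsion R ((↥I) ⊗[R] (↥I)) ∧ z ≠ 0) ∧
      Submodule.torsion R ((↥I) ⊗[R] (↥I)) ≠ ⊥ := by
  obtain ⟨x, y, hy, hxy⟩ := exists_one_tmul_notMem_span_of_forall_span_ne_top (M := I)
    fun x hx => hI (.of_span_singleton_eq_top hx)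
  have hz : x ⊗ₜ[R] y - y ⊗ₜ[R] x ≠ 0 :=
    tmul_sub_tmul_ne_zero (TensorProduct.mk R (ResidueField R) I 1) hy hxy
  have htors : x ⊗ₜ[R] y - y ⊗ₜ[R] x ∈ Submodule.torsion R (I ⊗[R] I) :=
    ⟨⟨a, ha'⟩, I.smul_tmul_sub_tmul_eq_zero ha x y⟩
  exact ⟨⟨_, htors, hz⟩, fun hbot => hz ((Submodule.mem_bot R).1 (hbot ▸ htors))⟩
end

section
/- Let R be a commutative Noetherian local ring, M a finitely generated torsion-free R-module with Ext^1_R(M,R) \neq 0 minimally generated by t elements. Let \alpha: 0 \to R^t \to N \to M \to 0 be an extension whose class in Ext^1_R(M, R^t) \cong Ext^1_R(M,R)^t corresponds to a minimal generating set (\alpha_1,...,\alpha_t) of Ext^1_R(M,R). Then Ext^1_R(N, R) = 0. -/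
open CategoryTheory CategoryTheory.Abelian

noncomputable section

noncomputable instance (R : Type) [CommRing R] :
    HasDerivedCategory (ModuleCat.{0} R) :=
  HasDerivedCategory.standard _

instance (R : Type) [CommRing R] : HasExt.{1} (ModuleCat.{0} R) :=
  hasExt_of_hasDerivedCategory _

variable (R : Type) [CommRing R]

/-- The `R`-scalar action on `Ext`-groups into `R`, given by composing with the
multiplication-by-`r` endomorphism of `R`. -/
def extSmul {X : ModuleCat.{0} R} (r : R) (e : Ext X (ModuleCat.of R R) 1) :
    Ext X (ModuleCat.of R R) 1 :=
  e.comp (Ext.mk₀ (ModuleCat.ofHom (LinearMap.lsmul R R r))) (add_zero 1)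

/-- A family `α : Fin t → Ext¹(X, R)` generates `Ext¹(X, R)` as an `R`-module. -/
def ExtGenerates {X : ModuleCat.{0} R} {t : ℕ}
    (α : Fin t → Ext X (ModuleCat.of R R) 1) : Prop :=
  ∀ e : Ext X (ModuleCat.of R R) 1,
    ∃ c : Fin t → R, e = ∑ i, extSmul R (c i) (α i)

/-!
From `0 → Rᵗ → N → M → 0` one gets the exact sequence
`Hom(Rᵗ, R) → Ext¹(M, R) → Ext¹(N, R) → Ext¹(Rᵗ, R) = 0`.
The connecting map sends `φ` to the class of the extension pushed out along `φ`; on the `i`-th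
coordinate projection it gives `αᵢ`. Since the `αᵢ` generate `Ext¹(M, R)` it is surjective,
so `Ext¹(N, R) = 0`.
-/

namespace CategoryTheory.ShortComplex.ShortExact

variable {C : Type*} [Category C] [Abelian C] [HasExt C]

lemma subsingleton_ext_one_X₂ {S : ShortComplex C} (hS : S.ShortExact) {Y : C}
    [Subsingleton (Ext S.X₁ Y 1)]
    (hδ : ∀ y : Ext S.X₃ Y 1, ∃ φ : S.X₁ ⟶ Y, y = hS.extClass.comp (Ext.mk₀ φ) (add_zero 1)) :
    Subsingleton (Ext S.X₂ Y 1) := by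
  refine subsingleton_of_forall_eq 0 fun e => ?_
  obtain ⟨y, rfl⟩ := Ext.contravariant_sequence_exact₂ hS Y e (Subsingleton.elim _ _)
  obtain ⟨φ, rfl⟩ := hδ y
  exact hS.comp_extClass_assoc _ _

end CategoryTheory.ShortComplex.ShortExact

lemma CategoryTheory.Abelian.Ext.subsingleton_of_iso {C : Type*} [Category C] [Abelian C]
    [HasExt C] {X X' Y : C} (i : X ≅ X') {n : ℕ} [Subsingleton (Ext X Y n)] :
    Subsingleton (Ext X' Y n) :=
  Function.LeftInverse.injective (g := fun e => (Ext.mk₀ i.inv).comp e (zero_add n))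
    (f := fun e => (Ext.mk₀ i.hom).comp e (zero_add n))
    (fun e => by dsimp only; rw [Ext.mk₀_comp_mk₀_assoc, Iso.inv_hom_id, Ext.mk₀_id_comp])
    |>.subsingleton

variable {R}

lemma exists_extClass_comp_eq_of_extGenerates {t : ℕ} {S : ShortComplex (ModuleCat.{0} R)}
    (hS : S.ShortExact) {X : ModuleCat.{0} R}
    (e₁ : S.X₁ ≅ ModuleCat.of R (Fin t → R)) (e₃ : S.X₃ ≅ X)
    {α : Fin t → Ext X (ModuleCat.of R R) 1}
    (hα : ∀ i : Fin t, α i =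
      (Ext.mk₀ e₃.inv).comp
        (hS.extClass.comp
          (Ext.mk₀ (e₁.hom ≫ ModuleCat.ofHom (LinearMap.proj i))) (add_zero 1))
        (zero_add 1))
    (hgen : ExtGenerates R α) (y : Ext S.X₃ (ModuleCat.of R R) 1) :
    ∃ φ : S.X₁ ⟶ ModuleCat.of R R, y = hS.extClass.comp (Ext.mk₀ φ) (add_zero 1) := by
  obtain ⟨c, hc⟩ := hgen ((Ext.mk₀ e₃.inv).comp y (zero_add 1))
  refine ⟨∑ i, (e₁.hom ≫ ModuleCat.ofHom (LinearMap.proj i)) ≫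
    ModuleCat.ofHom (LinearMap.lsmul R R (c i)), ?_⟩
  have hy : y = (Ext.mk₀ e₃.hom).comp ((Ext.mk₀ e₃.inv).comp y (zero_add 1)) (zero_add 1) := by
    rw [Ext.mk₀_comp_mk₀_assoc, Iso.hom_inv_id, Ext.mk₀_id_comp]
  rw [hy, hc, Ext.comp_sum, Ext.mk₀_sum, Ext.comp_sum]
  refine Finset.sum_congr rfl fun i _ => ?_
  rw [extSmul, hα i, Ext.comp_assoc_of_third_deg_zero, Ext.mk₀_comp_mk₀_assoc, Iso.hom_inv_id,
    Ext.mk₀_id_comp, Ext.comp_assoc_of_third_deg_zero, Ext.mk₀_comp_mk₀]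

theorem stmt_17_general (R : Type) [CommRing R]
    (M : Type) [AddCommGroup M] [Module R M]
    (t : ℕ)
    (N : Type) [AddCommGroup N] [Module R N]
    -- the short complex `Rᵗ → N → M` and its extension class
    (S : ShortComplex (ModuleCat.{0} R))
    (hS : S.ShortExact)
    (e₁ : S.X₁ ≅ ModuleCat.of R (Fin t → R)) (e₂ : S.X₂ ≅ ModuleCat.of R N)
    (e₃ : S.X₃ ≅ ModuleCat.of R M)
    -- the components `α i` of the class of this extension in `Ext¹(M,R)ᵗ`
    (α : Fin t → Ext (ModuleCat.of R M) (ModuleCat.of R R) 1)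
    (hα : ∀ i : Fin t, α i =
      (Ext.mk₀ e₃.inv).comp
        (hS.extClass.comp
          (Ext.mk₀ (e₁.hom ≫ ModuleCat.ofHom (LinearMap.proj i))) (add_zero 1))
        (zero_add 1))
    -- `(α i)` is a generating set of `Ext¹(M,R)`, minimal among all generating sets
    (hgen : ExtGenerates R α) :
    Subsingleton (Ext (ModuleCat.of R N) (ModuleCat.of R R) 1) := by
  have : Projective S.X₁ := Projective.of_iso e₁.symm inferInstance
  have := Ext.subsingleton_of_projective S.X₁ (ModuleCat.of R R) 0
  have := hS.subsingleton_ext_one_X₂ (exists_extClass_comp_eq_of_extGenerates hS e₁ e₃ hα hgen)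
  exact Ext.subsingleton_of_iso e₂

/-- Let `R` be a commutative Noetherian local ring, `M` a finitely
generated torsion-free module with `Ext¹_R(M,R) ≠ 0` minimally generated by `t`
elements.  If `α : 0 → Rᵗ → N → M → 0` is an extension whose class in
`Ext¹(M, Rᵗ) ≅ Ext¹(M,R)ᵗ` corresponds to a minimal generating set `(α₁, …, αₜ)` of
`Ext¹_R(M,R)`, then `Ext¹_R(N,R) = 0`. -/
theorem stmt_17 (R : Type) [CommRing R] [IsNoetherianRing R] [IsLocalRing R]
    (M : Type) [AddCommGroup M] [Module R M] [Module.Finite R M]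
    (hMtf : Submodule.torsion R M = ⊥)
    (hExtNonzero : Nontrivial (Ext (ModuleCat.of R M) (ModuleCat.of R R) 1))
    (t : ℕ)
    (N : Type) [AddCommGroup N] [Module R N] [Module.Finite R N]
    (f : (Fin t → R) →ₗ[R] N) (g : N →ₗ[R] M)
    (hf : Function.Injective f) (hg : Function.Surjective g)
    (hfg : Function.Exact f g)
    -- the short complex `Rᵗ → N → M` and its extension class
    (S : ShortComplex (ModuleCat.{0} R))
    (hS : S.ShortExact)
    (e₁ : S.X₁ ≅ ModuleCat.of R (Fin t → R)) (e₂ : S.X₂ ≅ ModuleCat.of R N)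
    (e₃ : S.X₃ ≅ ModuleCat.of R M)
    (hcomm₁ : S.f = e₁.hom ≫ ModuleCat.ofHom f ≫ e₂.inv)
    (hcomm₂ : S.g = e₂.hom ≫ ModuleCat.ofHom g ≫ e₃.inv)
    -- the components `α i` of the class of this extension in `Ext¹(M,R)ᵗ`
    (α : Fin t → Ext (ModuleCat.of R M) (ModuleCat.of R R) 1)
    (hα : ∀ i : Fin t, α i =
      (Ext.mk₀ e₃.inv).comp
        (hS.extClass.comp
          (Ext.mk₀ (e₁.hom ≫ ModuleCat.ofHom (LinearMap.proj i))) (add_zero 1))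
        (zero_add 1))
    -- `(α i)` is a generating set of `Ext¹(M,R)`, minimal among all generating sets
    (hgen : ExtGenerates R α)
    (hmin : ∀ (s : ℕ) (β : Fin s → Ext (ModuleCat.of R M) (ModuleCat.of R R) 1),
      ExtGenerates R β → t ≤ s) :
    Subsingleton (Ext (ModuleCat.of R N) (ModuleCat.of R R) 1) :=
  stmt_17_general R M t N S hS e₁ e₂ e₃ α hα hgen
end
end
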